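/- arXiv:1207.4516 — 4 statements merged into one kernel-verified Lean document; each statement's English description precedes it below -/
import Mathlib

section
/- Let V and W be finite-dimensional complex vector spaces, X ⊆ Hom(V,W) an irreducible closed subvariety, and f ∈ X a point at which X is smooth and rk f is maximal among elements of X. If g is a tangent vector to X at f (i.e., there is an analytic arc F(t) = f + g·t + O(t²) in X), then g(ker f) ⊆ im f. -/
/-!
Suppose `f u = 0` but `g u ∉ im f`. Pick `e₁, …, e_r` with `f e₁, …, f e_r` a basis of `im f`.
Along the arc, the vectors `F(t) e₁, …, F(t) e_r, t⁻¹ F(t) u` all lie in `im F(t)` and converge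
to `f e₁, …, f e_r, g u`, which are linearly independent. Linear independence is an open
condition, so `rk F(t) > rk f` for small `t ≠ 0`, contradicting the maximality of `rk f`.
-/

open Module Filter Topology Submodule

section LinearAlgebra

variable {K V W : Type*} [Field K] [AddCommGroup V] [Module K V] [AddCommGroup W] [Module K W]

theorem LinearMap.exists_linearIndependent_comp (f : V →ₗ[K] W)
    [FiniteDimensional K (LinearMap.range f)] :
    ∃ e : Fin (finrank K (LinearMap.range f)) → V, LinearIndependent K (f ∘ e) := by
  let b := finBasis K (LinearMap.range f)
  choose e he using fun i => LinearMap.mem_range.mp (b i).2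
  refine ⟨e, ?_⟩
  have hfe : f ∘ e = (LinearMap.range f).subtype ∘ b := funext he
  rw [hfe]
  exact b.linearIndependent.map' _ (ker_subtype _)

theorem LinearIndependent.card_le_finrank_of_forall_mem [FiniteDimensional K W] {ι : Type*}
    [Fintype ι] {v : ι → W} (hv : LinearIndependent K v) {p : Submodule K W}
    (hp : ∀ i, v i ∈ p) : Fintype.card ι ≤ finrank K p :=
  (finrank_span_eq_card hv).symm.trans_le
    (Submodule.finrank_mono (span_le.mpr (Set.range_subset_iff.mpr hp)))

end LinearAlgebra

section Arc

variable {V W : Type*} [NormedAddCommGroup V] [NormedSpace ℂ V]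
  [NormedAddCommGroup W] [NormedSpace ℂ W]

theorem tendsto_inv_smul_apply_of_hasDerivAt {F : ℝ → V →L[ℂ] W} {g : V →L[ℂ] W}
    (hF : HasDerivAt F g 0) {u : V} (hu : F 0 u = 0) :
    Tendsto (fun t : ℝ => t⁻¹ • F t u) (𝓝[≠] 0) (𝓝 (g u)) := by
  have hslope := ((ContinuousLinearMap.apply ℂ W u).continuous.tendsto g).comp
    (hasDerivAt_iff_tendsto_slope.mp hF)
  simpa only [Function.comp_def, ContinuousLinearMap.apply_apply, slope_def_module,
    smul_apply, sub_apply, hu, sub_zero] using hslope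

theorem eventually_finrank_range_lt_of_hasDerivAt [FiniteDimensional ℂ W]
    {F : ℝ → V →L[ℂ] W} {g : V →L[ℂ] W} (hF : HasDerivAt F g 0) {u : V} (hu : F 0 u = 0)
    (hgu : g u ∉ LinearMap.range (F 0 : V →ₗ[ℂ] W)) :
    ∀ᶠ t in 𝓝[≠] 0, finrank ℂ (LinearMap.range (F 0 : V →ₗ[ℂ] W)) <
      finrank ℂ (LinearMap.range (F t : V →ₗ[ℂ] W)) := by
  set r := finrank ℂ (LinearMap.range (F 0 : V →ₗ[ℂ] W))
  obtain ⟨e, he⟩ := (F 0 : V →ₗ[ℂ] W).exists_linearIndependent_comp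
  let v : ℝ → Fin (r + 1) → W := fun t => Fin.snoc (fun i => F t (e i)) (t⁻¹ • F t u)
  have hlim : Tendsto v (𝓝[≠] 0) (𝓝 (Fin.snoc (fun i => F 0 (e i)) (g u))) := by
    refine Tendsto.finSnoc (tendsto_pi_nhds.mpr fun i => ?_)
      (tendsto_inv_smul_apply_of_hasDerivAt hF hu)
    exact (hF.continuousAt.clm_apply continuousAt_const).tendsto.mono_left nhdsWithin_le_nhds
  have hli : LinearIndependent ℂ (Fin.snoc (fun i => F 0 (e i)) (g u) : Fin (r + 1) → W) := by
    refine linearIndependent_finSnoc.mpr ⟨he, fun h => hgu ?_⟩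
    exact span_le.mpr (Set.range_subset_iff.mpr fun i => LinearMap.mem_range_self _ _) h
  filter_upwards [hlim.eventually hli.eventually] with t ht
  have hmem : ∀ i, v t i ∈ LinearMap.range (F t : V →ₗ[ℂ] W) := by
    refine Fin.lastCases ?_ (fun i => ?_)
    · simpa only [v, Fin.snoc_last, ContinuousLinearMap.coe_coe] using
        smul_of_tower_mem _ t⁻¹ (LinearMap.mem_range_self (F t : V →ₗ[ℂ] W) u)
    · simp [v]
  simpa using ht.card_le_finrank_of_forall_mem hmem

end Arc

theorem stmt0_general {V W : Type*} [NormedAddCommGroup V] [NormedSpace ℂ V]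
    [NormedAddCommGroup W] [NormedSpace ℂ W]
    [FiniteDimensional ℂ W]
    (X : Set (V →L[ℂ] W))
    (f g : V →L[ℂ] W)
    (hmax : ∀ h ∈ X, finrank ℂ (LinearMap.range ((h : V →L[ℂ] W) : V →ₗ[ℂ] W)) ≤
      finrank ℂ (LinearMap.range ((f : V →L[ℂ] W) : V →ₗ[ℂ] W)))
    (F : ℝ → (V →L[ℂ] W)) (ε : ℝ) (hε : 0 < ε)
    (hFX : ∀ t ∈ Set.Ioo (-ε) ε, F t ∈ X)
    (hF0 : F 0 = f)
    (hF' : HasDerivAt F g 0) :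
    ∀ u ∈ LinearMap.ker ((f : V →L[ℂ] W) : V →ₗ[ℂ] W),
      g u ∈ LinearMap.range ((f : V →L[ℂ] W) : V →ₗ[ℂ] W) := by
  subst hF0
  intro u hu
  by_contra hgu
  have hnear : ∀ᶠ t in 𝓝[≠] (0 : ℝ), t ∈ Set.Ioo (-ε) ε :=
    mem_nhdsWithin_of_mem_nhds (Ioo_mem_nhds (neg_neg_iff_pos.mpr hε) hε)
  obtain ⟨t, hrank, ht⟩ :=
    ((eventually_finrank_range_lt_of_hasDerivAt hF' hu hgu).and hnear).exists
  exact (hmax _ (hFX t ht)).not_gt hrank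

/-- Infinitesimal ker/coker lemma: if `X ⊆ Hom(V,W)` is closed, `f ∈ X` has maximal
rank among elements of `X`, and `g` is tangent to `X` at `f` (witnessed by a
differentiable arc `F : (-ε,ε) → X` with `F 0 = f`, `F' 0 = g`), then
`g(ker f) ⊆ im f`. -/
theorem stmt0 {V W : Type*} [NormedAddCommGroup V] [NormedSpace ℂ V]
    [FiniteDimensional ℂ V] [NormedAddCommGroup W] [NormedSpace ℂ W]
    [FiniteDimensional ℂ W]
    (X : Set (V →L[ℂ] W)) (hXcl : IsClosed X)
    (f g : V →L[ℂ] W) (hf : f ∈ X)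
    (hmax : ∀ h ∈ X, finrank ℂ (LinearMap.range ((h : V →L[ℂ] W) : V →ₗ[ℂ] W)) ≤
      finrank ℂ (LinearMap.range ((f : V →L[ℂ] W) : V →ₗ[ℂ] W)))
    (F : ℝ → (V →L[ℂ] W)) (ε : ℝ) (hε : 0 < ε)
    (hFX : ∀ t ∈ Set.Ioo (-ε) ε, F t ∈ X)
    (hF0 : F 0 = f)
    (hF' : HasDerivAt F g 0) :
    ∀ u ∈ LinearMap.ker ((f : V →L[ℂ] W) : V →ₗ[ℂ] W),
      g u ∈ LinearMap.range ((f : V →L[ℂ] W) : V →ₗ[ℂ] W) :=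
  stmt0_general X f g hmax F ε hε hFX hF0 hF'
end

section
/- Let A be the q×q block-diagonal skew-symmetric matrix over ℂ with first 2×2 block zero and remaining (q-2)/2 diagonal blocks equal to J = [[0,1],[-1,0]] (q even, q ≥ 4), and let B be a skew-symmetric q×q matrix whose top-left 2×2 block C satisfies det C ≠ 0. Then the coefficient of λ^{q-2}μ² in det(λA + μB) equals det C, hence is nonzero. -/
open Matrix MvPolynomial Finset

lemma coeff_aux (q k l : ℕ) (c d : ℂ) :
    MvPolynomial.coeff (Finsupp.single (0 : Fin 2) (q - 2) + Finsupp.single (1 : Fin 2) 2)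
      (X (0 : Fin 2) ^ k * MvPolynomial.C c * (X (1 : Fin 2) ^ l * MvPolynomial.C d)) =
    if k = q - 2 ∧ l = 2 then c * d else 0 := by
  have hiff : (Finsupp.single (0 : Fin 2) k + Finsupp.single (1 : Fin 2) l =
      Finsupp.single (0 : Fin 2) (q - 2) + Finsupp.single (1 : Fin 2) 2) ↔ (k = q - 2 ∧ l = 2) := by
    constructor
    · intro h
      constructor
      · have := DFunLike.congr_fun h (0 : Fin 2)
        simpa [Finsupp.single_apply] using this
      · have := DFunLike.congr_fun h (1 : Fin 2)
        simpa [Finsupp.single_apply] using this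
    · rintro ⟨rfl, rfl⟩; rfl
  rw [X_pow_eq_monomial, X_pow_eq_monomial, MvPolynomial.C_apply, MvPolynomial.C_apply,
    MvPolynomial.monomial_mul, MvPolynomial.monomial_mul, MvPolynomial.monomial_mul,
    MvPolynomial.coeff_monomial]
  simp only [add_zero]
  rw [if_congr hiff rfl rfl]
  split_ifs <;> ring

lemma detJblocks (n m : ℕ) (hnm : n = 2 * m) :
    (Matrix.det (Matrix.of fun i j : Fin n =>
      (if (j : ℕ) = (i : ℕ) + 1 ∧ Even (i : ℕ) then (1:ℂ)
       else if (i : ℕ) = (j : ℕ) + 1 ∧ Even (j : ℕ) then -1 else 0))) = 1 := by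
  subst hnm
  set M : Matrix (Fin (2*m)) (Fin (2*m)) ℂ := Matrix.of fun i j : Fin (2*m) =>
      (if (j : ℕ) = (i : ℕ) + 1 ∧ Even (i : ℕ) then (1:ℂ)
       else if (i : ℕ) = (j : ℕ) + 1 ∧ Even (j : ℕ) then -1 else 0) with hM
  let e : Fin m × Fin 2 ≃ Fin (2*m) := finProdFinEquiv.trans (finCongr (by omega))
  have key : M.submatrix e e =
      Matrix.kroneckerMap (fun x1 x2 => x1 * x2) (1 : Matrix (Fin m) (Fin m) ℂ) !![0,1;-1,0] := by
    ext ⟨a,b⟩ ⟨c,d⟩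
    have hab : ((e (a,b) : Fin (2*m)) : ℕ) = (b : ℕ) + 2 * (a : ℕ) := by
      simp [e, finCongr_apply, finProdFinEquiv_apply_val]
    have hcd : ((e (c,d) : Fin (2*m)) : ℕ) = (d : ℕ) + 2 * (c : ℕ) := by
      simp [e, finCongr_apply, finProdFinEquiv_apply_val]
    simp only [Matrix.submatrix_apply, hM, Matrix.of_apply, Matrix.kroneckerMap_apply,
      Matrix.one_apply, hab, hcd, Nat.even_iff]
    fin_cases b <;> fin_cases d <;>
      rcases eq_or_ne a c with h | h <;>
        simp_all <;> first | omega | (split_ifs <;> first | rfl | omega | simp_all)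
  have hd := Matrix.det_submatrix_equiv_self e M
  rw [key] at hd
  rw [← hd, Matrix.det_kronecker]
  norm_num [Matrix.det_fin_two_of]

lemma coeff_prod_linear (q : ℕ) (hq : 4 ≤ q) (a b : Fin q → ℂ)
    (h0 : a ⟨0, by omega⟩ = 0) (h1 : a ⟨1, by omega⟩ = 0) :
    MvPolynomial.coeff (Finsupp.single (0 : Fin 2) (q - 2) + Finsupp.single (1 : Fin 2) 2)
      (∏ i : Fin q, (X (0 : Fin 2) * MvPolynomial.C (a i) + X (1 : Fin 2) * MvPolynomial.C (b i))) =
    (∏ i ∈ univ \ {⟨0, by omega⟩, ⟨1, by omega⟩}, a i) *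
      ∏ i ∈ ({⟨0, by omega⟩, ⟨1, by omega⟩} : Finset (Fin q)), b i := by
  set i0 : Fin q := ⟨0, by omega⟩
  set i1 : Fin q := ⟨1, by omega⟩
  rw [Finset.prod_add, MvPolynomial.coeff_sum]
  have hterm : ∀ t ∈ (univ : Finset (Fin q)).powerset,
      MvPolynomial.coeff (Finsupp.single (0 : Fin 2) (q - 2) + Finsupp.single (1 : Fin 2) 2)
        ((∏ i ∈ t, X (0 : Fin 2) * MvPolynomial.C (a i)) *
          ∏ i ∈ univ \ t, X (1 : Fin 2) * MvPolynomial.C (b i)) =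
      if t.card = q - 2 then (∏ i ∈ t, a i) * ∏ i ∈ univ \ t, b i else 0 := by
    intro t ht
    have hct : t.card ≤ q := by
      simpa using Finset.card_le_card (Finset.mem_powerset.mp ht)
    have hcs : (univ \ t).card = q - t.card := by
      rw [Finset.card_sdiff_of_subset (Finset.subset_univ t)]; simp
    rw [Finset.prod_mul_distrib, Finset.prod_mul_distrib, Finset.prod_const, Finset.prod_const,
      ← map_prod, ← map_prod, coeff_aux]
    rw [hcs]
    have : (t.card = q - 2 ∧ q - t.card = 2) ↔ t.card = q - 2 := by omega
    rw [if_congr this rfl rfl]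
  rw [Finset.sum_congr rfl hterm]
  rw [Finset.sum_eq_single (univ \ ({i0, i1} : Finset (Fin q)))]
  · have h01 : i0 ≠ i1 := by simp [i0, i1, Fin.ext_iff]
    have hcard : (univ \ ({i0, i1} : Finset (Fin q))).card = q - 2 := by
      rw [Finset.card_sdiff_of_subset (Finset.subset_univ _)]
      simp [Finset.card_insert_of_notMem, h01]
    rw [if_pos hcard]
    congr 1
    · congr 1
      simp [Finset.sdiff_sdiff_self_left]
  · intro t ht htne
    split_ifs with hc
    · -- t ≠ univ \ {i0,i1}, card t = q-2 ⇒ i0 ∈ t ∨ i1 ∈ t ⇒ prod a = 0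
      have : i0 ∈ t ∨ i1 ∈ t := by
        by_contra hcon
        push_neg at hcon
        have hsub : t ⊆ univ \ ({i0, i1} : Finset (Fin q)) := by
          intro x hx
          simp only [Finset.mem_sdiff, Finset.mem_univ, true_and, Finset.mem_insert,
            Finset.mem_singleton]
          rintro (rfl | rfl)
          exacts [hcon.1 hx, hcon.2 hx]
        have h01 : i0 ≠ i1 := by simp [i0, i1, Fin.ext_iff]
        have hcard : (univ \ ({i0, i1} : Finset (Fin q))).card = q - 2 := by
          rw [Finset.card_sdiff_of_subset (Finset.subset_univ _)]
          simp [Finset.card_insert_of_notMem, h01]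
        exact htne (Finset.eq_of_subset_of_card_le hsub (by omega))
      rcases this with h | h
      · rw [Finset.prod_eq_zero h h0, zero_mul]
      · rw [Finset.prod_eq_zero h h1, zero_mul]
    · rfl
  · intro h
    exact absurd (Finset.mem_powerset.mpr (Finset.subset_univ _)) h


/-- Let `A` be the `q×q` skew-symmetric matrix which is block-diagonal with first
`2×2` block zero and the remaining diagonal blocks equal to `J = [[0,1],[-1,0]]`
(`q` even, `q ≥ 4`), and let `B` be a skew-symmetric `q×q` matrix whose top-left
`2×2` block `C₂` has `det C₂ ≠ 0`.  Then the coefficient of `λ^(q-2) μ^2` in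
`det (λA + μB)` equals `det C₂`, hence is nonzero. -/
theorem stmt2 (q : ℕ) (hq4 : 4 ≤ q) (hqe : Even q)
    (A B : Matrix (Fin q) (Fin q) ℂ)
    (hA : ∀ i j : Fin q, A i j =
      (if 2 ≤ (i : ℕ) ∧ (j : ℕ) = (i : ℕ) + 1 ∧ Even (i : ℕ) then 1
      else if 2 ≤ (j : ℕ) ∧ (i : ℕ) = (j : ℕ) + 1 ∧ Even (j : ℕ) then -1
      else 0))
    (hB : Bᵀ = -B)
    (C₂ : Matrix (Fin 2) (Fin 2) ℂ)
    (hC : ∀ i j : Fin 2,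
      C₂ i j = B (Fin.castLE (by omega) i) (Fin.castLE (by omega) j))
    (hdetC : C₂.det ≠ 0) :
    MvPolynomial.coeff
        ((Finsupp.single (0 : Fin 2) (q - 2) + Finsupp.single (1 : Fin 2) 2))
        (Matrix.det (Matrix.of fun i j : Fin q =>
          X (0 : Fin 2) * MvPolynomial.C (A i j) +
            X (1 : Fin 2) * MvPolynomial.C (B i j))) = C₂.det ∧
      MvPolynomial.coeff
        ((Finsupp.single (0 : Fin 2) (q - 2) + Finsupp.single (1 : Fin 2) 2))
        (Matrix.det (Matrix.of fun i j : Fin q =>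
          X (0 : Fin 2) * MvPolynomial.C (A i j) +
            X (1 : Fin 2) * MvPolynomial.C (B i j))) ≠ 0 := by
  have hA0 : ∀ i j : Fin q, ((i : ℕ) < 2 ∨ (j : ℕ) < 2) → A i j = 0 := by
    intro i j hij
    rw [hA, if_neg, if_neg]
    · rintro ⟨h1, h2, -⟩; omega
    · rintro ⟨h1, h2, -⟩; omega
  set i0 : Fin q := ⟨0, by omega⟩ with hi0
  set i1 : Fin q := ⟨1, by omega⟩ with hi1
  set D : Matrix (Fin q) (Fin q) ℂ := Matrix.of
    (fun i j => if (i : ℕ) < 2 ∧ (j : ℕ) < 2 then B i j else A i j) with hDdef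
  have step1 : MvPolynomial.coeff
      ((Finsupp.single (0 : Fin 2) (q - 2) + Finsupp.single (1 : Fin 2) 2))
      (Matrix.det (Matrix.of fun i j : Fin q =>
        X (0 : Fin 2) * MvPolynomial.C (A i j) +
          X (1 : Fin 2) * MvPolynomial.C (B i j))) = D.det := by
    rw [Matrix.det_apply', Matrix.det_apply', MvPolynomial.coeff_sum]
    refine Finset.sum_congr rfl fun σ _ => ?_
    rw [show (((Equiv.Perm.sign σ : ℤ)) : MvPolynomial (Fin 2) ℂ) =
        MvPolynomial.C ((Equiv.Perm.sign σ : ℤ) : ℂ) from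
      (map_intCast (MvPolynomial.C : ℂ →+* MvPolynomial (Fin 2) ℂ) _).symm,
      MvPolynomial.coeff_C_mul]
    congr 1
    simp only [Matrix.of_apply]
    rw [coeff_prod_linear q hq4 (fun i => A (σ i) i) (fun i => B (σ i) i)
      (hA0 _ _ (Or.inr (by norm_num))) (hA0 _ _ (Or.inr (by norm_num)))]
    -- now:  (∏ i ∈ univ \ {i0,i1}, A (σ i) i) * ∏ i ∈ {i0,i1}, B (σ i) i = ∏ i, D (σ i) i
    by_cases hσ : (σ i0 : ℕ) < 2 ∧ (σ i1 : ℕ) < 2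
    · rw [← Finset.prod_sdiff (Finset.subset_univ ({i0, i1} : Finset (Fin q)))
        (f := fun i => D (σ i) i)]
      congr 1
      · refine Finset.prod_congr rfl fun i hi => ?_
        simp only [Finset.mem_sdiff, Finset.mem_univ, true_and, Finset.mem_insert,
          Finset.mem_singleton, not_or] at hi
        have hiv : 2 ≤ (i : ℕ) := by
          have h0 : (i : ℕ) ≠ 0 := fun h => hi.1 (Fin.ext h)
          have h1 : (i : ℕ) ≠ 1 := fun h => hi.2 (Fin.ext h)
          omega
        rw [hDdef]
        simp only [Matrix.of_apply]
        rw [if_neg (by omega)]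
      · refine Finset.prod_congr rfl fun i hi => ?_
        simp only [Finset.mem_insert, Finset.mem_singleton] at hi
        rw [hDdef]
        simp only [Matrix.of_apply]
        rcases hi with rfl | rfl
        · rw [if_pos ⟨hσ.1, by norm_num⟩]
        · rw [if_pos ⟨hσ.2, by norm_num⟩]
    · rw [not_and_or, not_lt, not_lt] at hσ
      have hRHS : ∏ i : Fin q, D (σ i) i = 0 := by
        rcases hσ with h | h
        · refine Finset.prod_eq_zero (Finset.mem_univ i0) ?_
          rw [hDdef]; simp only [Matrix.of_apply]
          rw [if_neg (by omega)]
          exact hA0 _ _ (Or.inr (by norm_num))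
        · refine Finset.prod_eq_zero (Finset.mem_univ i1) ?_
          rw [hDdef]; simp only [Matrix.of_apply]
          rw [if_neg (by omega)]
          exact hA0 _ _ (Or.inr (by norm_num))
      have hLHS : ∏ i ∈ univ \ ({i0, i1} : Finset (Fin q)), A (σ i) i = 0 := by
        -- find i ∉ {i0,i1} with (σ i : ℕ) < 2
        obtain ⟨i, hi, hlt⟩ : ∃ i, i ∈ univ \ ({i0, i1} : Finset (Fin q)) ∧ (σ i : ℕ) < 2 := by
          set j0 := σ.symm i0 with hj0
          set j1 := σ.symm i1 with hj1
          have hs0 : σ j0 = i0 := σ.apply_symm_apply i0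
          have hs1 : σ j1 = i1 := σ.apply_symm_apply i1
          have hne : j0 ≠ j1 := by
            intro h; rw [h, hs1] at hs0
            exact absurd (congrArg Fin.val hs0) (by simp [hi0, hi1])
          rcases hσ with h | h
          · have hj00 : j0 ≠ i0 := by
              intro hh; rw [hh] at hs0; rw [hs0] at h; simp [hi0] at h
            have hj10 : j1 ≠ i0 := by
              intro hh; rw [hh] at hs1; rw [hs1] at h; simp [hi1] at h
            by_cases hcase : j0 = i1
            · refine ⟨j1, ?_, ?_⟩
              · simp only [Finset.mem_sdiff, Finset.mem_univ, true_and, Finset.mem_insert,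
                  Finset.mem_singleton, not_or]
                exact ⟨hj10, fun hh => hne (hcase.trans hh.symm)⟩
              · rw [hs1]; simp [hi1]
            · refine ⟨j0, ?_, ?_⟩
              · simp only [Finset.mem_sdiff, Finset.mem_univ, true_and, Finset.mem_insert,
                  Finset.mem_singleton, not_or]
                exact ⟨hj00, hcase⟩
              · rw [hs0]; simp [hi0]
          · have hj01 : j0 ≠ i1 := by
              intro hh; rw [hh] at hs0; rw [hs0] at h; simp [hi0] at h
            have hj11 : j1 ≠ i1 := by
              intro hh; rw [hh] at hs1; rw [hs1] at h; simp [hi1] at h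
            by_cases hcase : j0 = i0
            · refine ⟨j1, ?_, ?_⟩
              · simp only [Finset.mem_sdiff, Finset.mem_univ, true_and, Finset.mem_insert,
                  Finset.mem_singleton, not_or]
                exact ⟨fun hh => hne (hcase.trans hh.symm), hj11⟩
              · rw [hs1]; simp [hi1]
            · refine ⟨j0, ?_, ?_⟩
              · simp only [Finset.mem_sdiff, Finset.mem_univ, true_and, Finset.mem_insert,
                  Finset.mem_singleton, not_or]
                exact ⟨hcase, hj01⟩
              · rw [hs0]; simp [hi0]
        exact Finset.prod_eq_zero hi (hA0 _ _ (Or.inl hlt))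
      rw [hRHS, hLHS, zero_mul]
  have step2 : D.det = C₂.det := by
    let e : Fin 2 ⊕ Fin (q - 2) ≃ Fin q := finSumFinEquiv.trans (finCongr (by omega))
    have hel : ∀ i : Fin 2, ((e (Sum.inl i) : Fin q) : ℕ) = (i : ℕ) := by
      intro i; simp [e, finCongr_apply]
    have her : ∀ j : Fin (q - 2), ((e (Sum.inr j) : Fin q) : ℕ) = 2 + (j : ℕ) := by
      intro j; simp [e, finCongr_apply]
    have he : D.submatrix e e = Matrix.fromBlocks C₂ 0 0
        (Matrix.of fun i j : Fin (q - 2) =>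
          (if (j : ℕ) = (i : ℕ) + 1 ∧ Even (i : ℕ) then (1:ℂ)
           else if (i : ℕ) = (j : ℕ) + 1 ∧ Even (j : ℕ) then -1 else 0)) := by
      ext i j
      cases i with
      | inl i =>
        cases j with
        | inl j =>
          simp only [Matrix.submatrix_apply, Matrix.fromBlocks_apply₁₁, hDdef, Matrix.of_apply]
          rw [if_pos ⟨by rw [hel]; omega, by rw [hel]; omega⟩, hC]
          congr 1 <;> exact Fin.ext (by rw [hel]; rfl)
        | inr j =>
          simp only [Matrix.submatrix_apply, Matrix.fromBlocks_apply₁₂, hDdef, Matrix.of_apply,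
            Matrix.zero_apply]
          rw [if_neg (by rw [her]; omega)]
          exact hA0 _ _ (Or.inl (by rw [hel]; omega))
      | inr i =>
        cases j with
        | inl j =>
          simp only [Matrix.submatrix_apply, Matrix.fromBlocks_apply₂₁, hDdef, Matrix.of_apply,
            Matrix.zero_apply]
          rw [if_neg (by rw [her]; omega)]
          exact hA0 _ _ (Or.inr (by rw [hel]; omega))
        | inr j =>
          simp only [Matrix.submatrix_apply, Matrix.fromBlocks_apply₂₂, hDdef, Matrix.of_apply]
          rw [if_neg (by rw [her]; omega), hA]
          have c1 : (2 ≤ ((e (Sum.inr i) : Fin q) : ℕ) ∧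
              ((e (Sum.inr j) : Fin q) : ℕ) = ((e (Sum.inr i) : Fin q) : ℕ) + 1 ∧
              Even ((e (Sum.inr i) : Fin q) : ℕ)) ↔ ((j : ℕ) = (i : ℕ) + 1 ∧ Even (i : ℕ)) := by
            rw [her, her, Nat.even_iff, Nat.even_iff]; omega
          have c2 : (2 ≤ ((e (Sum.inr j) : Fin q) : ℕ) ∧
              ((e (Sum.inr i) : Fin q) : ℕ) = ((e (Sum.inr j) : Fin q) : ℕ) + 1 ∧
              Even ((e (Sum.inr j) : Fin q) : ℕ)) ↔ ((i : ℕ) = (j : ℕ) + 1 ∧ Even (j : ℕ)) := by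
            rw [her, her, Nat.even_iff, Nat.even_iff]; omega
          rw [if_congr c1 rfl (if_congr c2 rfl rfl)]
    have hsub := Matrix.det_submatrix_equiv_self e D
    rw [he] at hsub
    rw [← hsub, Matrix.det_fromBlocks_zero₂₁]
    have hq2 : q - 2 = 2 * ((q - 2) / 2) := by
      obtain ⟨c, hc⟩ := hqe; omega
    rw [detJblocks (q - 2) ((q - 2) / 2) hq2, mul_one]
  rw [step1, step2]
  exact ⟨rfl, hdetC⟩
end

section
/- Let q ≥ 4 be even and let A, B be skew-symmetric q×q complex matrices such that A has rank q-2 and the restriction of the bilinear form B to ker A is nondegenerate. Then μ = 0 is a root of multiplicity exactly 1 of the Pfaffian Pf(λA + μB) viewed as a homogeneous polynomial in (λ,μ). -/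
open MvPolynomial Matrix
open scoped Finset Polynomial

/-!
Let `D(μ) = det (A + μB)` and `k = dim ker A`. In a basis whose vectors `b_j`, `j ∈ S`, span
`ker A`, the vectors `(A + μB) b_j` with `j ∈ S` equal `μ B b_j`, so the coefficient of `μ^k`
in `D`, times the determinant of the basis, is the determinant of the vectors `B b_j` (`j ∈ S`)
and `A b_j` (`j ∉ S`). These are independent: skew-symmetry makes `ker A` orthogonal to
`range A`, so a relation `A x + B u = 0` with `u ∈ ker A` forces `B u ⟂ ker A`, hence `u = 0`
by nondegeneracy, and then `x ∈ ker A`. Here `k = 2`, so `μ⁴ ∤ Pf²` and `μ² ∤ Pf`; on the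
other hand `Pf(λ, 0)² = det (λA) = 0`, so `μ ∣ Pf`.
-/

theorem Submodule.exists_basis_mem_iff_repr_eq_zero {K V n : Type*} [Field K] [AddCommGroup V]
    [Module K V] [FiniteDimensional K V] [Fintype n] (W : Submodule K V)
    (hn : Module.finrank K V = Fintype.card n) :
    ∃ (b : Module.Basis n K V) (S : Finset n), #S = Module.finrank K W ∧
      ∀ v, v ∈ W ↔ ∀ j ∉ S, b.repr v j = 0 := by
  obtain ⟨W', hW'⟩ := W.exists_isCompl
  let bW' := Module.finBasis K W'
  let σ : Fin (Module.finrank K W') ⊕ Fin (Module.finrank K W) ≃ n :=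
    Fintype.equivOfCardEq <| by
      rw [Fintype.card_sum, Fintype.card_fin, Fintype.card_fin,
        Submodule.finrank_add_eq_of_isCompl hW'.symm, hn]
  let S := Finset.univ.map (Function.Embedding.inr.trans σ.toEmbedding)
  refine ⟨((bW'.prod (Module.finBasis K W)).map
    (Submodule.prodEquivOfIsCompl W' W hW'.symm)).reindex σ, S, by simp [S], fun v => ?_⟩
  have hnotMem : ∀ j, j ∉ S ↔ ∃ i, j = σ (Sum.inl i) := by
    intro j
    obtain ⟨k | k, rfl⟩ := σ.surjective j <;> simp [S]
  simp only [hnotMem, forall_exists_index, forall_eq_apply_imp_iff,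
    Module.Basis.repr_reindex_apply, Equiv.symm_apply_apply, Module.Basis.map_repr,
    LinearEquiv.trans_apply, Module.Basis.prod_repr_inl]
  rw [← Submodule.prodEquivOfIsCompl_symm_apply_fst_eq_zero (h := hW'.symm)]
  exact bW'.repr.map_eq_zero_iff.symm.trans Finsupp.ext_iff

namespace MvPolynomial

variable {σ R : Type*} [CommRing R] [DecidableEq σ]

theorem X_dvd_sub_aeval_update_zero (i : σ) (p : MvPolynomial σ R) :
    X i ∣ p - aeval (Function.update X i 0) p := by
  induction p using MvPolynomial.induction_on with
  | C a => simp
  | add p q hp hq => simpa [add_sub_add_comm] using dvd_add hp hq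
  | mul_X p j hp =>
    have hj : X i ∣ X j - Function.update (X : σ → MvPolynomial σ R) i 0 j := by
      by_cases hji : j = i
      · subst hji; simp
      · simp [hji]
    rw [map_mul, aeval_X, show ∀ a b c d : MvPolynomial σ R,
      a * b - c * d = (a - c) * b + c * (b - d) by intros; ring]
    exact dvd_add (dvd_mul_of_dvd_left hp _) (dvd_mul_of_dvd_right hj _)

theorem X_dvd_iff_aeval_update_zero {i : σ} {p : MvPolynomial σ R} :
    X i ∣ p ↔ aeval (Function.update (X : σ → MvPolynomial σ R) i 0) p = 0 := by
  refine ⟨?_, fun h => by simpa only [h, sub_zero] using X_dvd_sub_aeval_update_zero i p⟩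
  rintro ⟨q, rfl⟩
  simp

end MvPolynomial

namespace Matrix

section CommRing

variable {n R : Type*} [Fintype n] [CommRing R]

theorem mulVec_basis_eq_zero_of_mem {A : Matrix n n R} {b : Module.Basis n R (n → R)}
    {S : Finset n} (hker : ∀ v, A *ᵥ v = 0 ↔ ∀ j ∉ S, b.repr v j = 0) {j : n} (hj : j ∈ S) :
    A *ᵥ b j = 0 :=
  (hker _).2 fun i hi => by simp [show j ≠ i by rintro rfl; exact hi hj]

variable [DecidableEq n]

theorem coeff_det_X_smul_add_C_mul_det (A B : Matrix n n R) (b : n → n → R) (S : Finset n)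
    (hS : ∀ j ∈ S, A *ᵥ b j = 0) :
    (det ((Polynomial.X : R[X]) • B.map Polynomial.C + A.map Polynomial.C)).coeff #S *
        det (of b) =
      det (of fun j => if j ∈ S then B *ᵥ b j else A *ᵥ b j) := by
  set M : Matrix n n R[X] := (Polynomial.X : R[X]) • B.map Polynomial.C + A.map Polynomial.C
  set N : Matrix n n R[X] := of fun j i =>
    if j ∈ S then Polynomial.C ((B *ᵥ b j) i)
    else Polynomial.X * Polynomial.C ((B *ᵥ b j) i) + Polynomial.C ((A *ᵥ b j) i)
  have hfactor : (of b).map Polynomial.C * Mᵀ =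
      of fun j i => (if j ∈ S then Polynomial.X else 1) * N j i := by
    ext j i
    have hentry : ((of b).map Polynomial.C * Mᵀ) j i =
        Polynomial.X * Polynomial.C ((B *ᵥ b j) i) + Polynomial.C ((A *ᵥ b j) i) := by
      simp only [M, mul_apply, transpose_apply, add_apply, smul_apply, map_apply, of_apply,
        mulVec, dotProduct, smul_eq_mul, mul_add, Finset.sum_add_distrib, Finset.mul_sum,
        map_sum, map_mul]
      congr 1 <;> exact Finset.sum_congr rfl fun k _ => by ring
    by_cases hj : j ∈ S
    · simp [hentry, N, hj, hS j hj]
    · simp [hentry, N, hj]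
  have hdet : det M * Polynomial.C (det (of b)) = Polynomial.X ^ #S * det N := by
    rw [← det_transpose M, mul_comm, Polynomial.C.map_det, RingHom.mapMatrix_apply, ← det_mul,
      hfactor, det_mul_column, Finset.prod_ite_mem, Finset.univ_inter, Finset.prod_const]
  have hN : N.map (Polynomial.evalRingHom 0) =
      of fun j => if j ∈ S then B *ᵥ b j else A *ᵥ b j := by
    ext j i
    by_cases hj : j ∈ S <;> simp [N, hj]
  have hcoeff := congrArg (Polynomial.coeff · #S) hdet
  simp only [Polynomial.coeff_mul_C, Polynomial.coeff_X_pow_mul', le_refl, if_true,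
    Nat.sub_self, Polynomial.coeff_zero_eq_eval_zero] at hcoeff
  rw [hcoeff, ← Polynomial.coe_evalRingHom, RingHom.map_det, RingHom.mapMatrix_apply, hN]

end CommRing

section Field

variable {n K : Type*} [Fintype n] [Field K]

theorem rank_add_finrank_ker_mulVecLin {m : Type*} (A : Matrix m n K) :
    A.rank + Module.finrank K (LinearMap.ker A.mulVecLin) = Fintype.card n := by
  rw [← Module.finrank_fintype_fun_eq_card K]
  exact LinearMap.finrank_range_add_finrank_ker A.mulVecLin

theorem dotProduct_mulVec_eq_neg_of_transpose_eq_neg {A : Matrix n n K} (hA : Aᵀ = -A)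
    (v w : n → K) : v ⬝ᵥ A *ᵥ w = -(w ⬝ᵥ A *ᵥ v) := by
  rw [dotProduct_mulVec, ← mulVec_transpose, hA, neg_mulVec, neg_dotProduct, dotProduct_comm]

variable [DecidableEq n]

theorem linearIndependent_ite_mulVec {A B : Matrix n n K} (hA : Aᵀ = -A) (hB : Bᵀ = -B)
    (hnd : ∀ v : n → K, A *ᵥ v = 0 → v ≠ 0 → ∃ w : n → K, A *ᵥ w = 0 ∧ v ⬝ᵥ B *ᵥ w ≠ 0)
    (b : Module.Basis n K (n → K)) (S : Finset n)
    (hker : ∀ v, A *ᵥ v = 0 ↔ ∀ j ∉ S, b.repr v j = 0) :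
    LinearIndependent K fun j => if j ∈ S then B *ᵥ b j else A *ᵥ b j := by
  rw [Fintype.linearIndependent_iff]
  intro c hc
  set x := ∑ j, c j • b j
  set u := ∑ j ∈ S, c j • b j
  have hrepr : ⇑(b.repr x) = c := b.repr_sum_self c
  have hsum : A *ᵥ x + B *ᵥ u = 0 :=
    calc A *ᵥ x + B *ᵥ u = ∑ j, c j • A *ᵥ b j + ∑ j ∈ S, c j • B *ᵥ b j := by
          simp only [x, u, mulVec_sum, mulVec_smul]
      _ = ∑ j, (c j • A *ᵥ b j + if j ∈ S then c j • B *ᵥ b j else 0) := by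
          rw [Finset.sum_add_distrib, Finset.sum_ite_mem, Finset.univ_inter]
      _ = ∑ j, c j • if j ∈ S then B *ᵥ b j else A *ᵥ b j := by
          refine Finset.sum_congr rfl fun j _ => ?_
          split_ifs with hj
          · rw [mulVec_basis_eq_zero_of_mem hker hj, smul_zero, zero_add]
          · rw [add_zero]
      _ = 0 := hc
  have hAu : A *ᵥ u = 0 := by
    rw [mulVec_sum]
    exact Finset.sum_eq_zero fun j hj => by
      rw [mulVec_smul, mulVec_basis_eq_zero_of_mem hker hj, smul_zero]
  have hu : u = 0 := by
    by_contra hu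
    obtain ⟨w, hAw, hBw⟩ := hnd u hAu hu
    have hAx : w ⬝ᵥ A *ᵥ x = 0 := by
      rw [dotProduct_mulVec_eq_neg_of_transpose_eq_neg hA, hAw, dotProduct_zero, neg_zero]
    have hBu : w ⬝ᵥ B *ᵥ u = 0 := by
      simpa only [dotProduct_add, hAx, zero_add, dotProduct_zero] using congrArg (w ⬝ᵥ ·) hsum
    exact hBw (by rw [dotProduct_mulVec_eq_neg_of_transpose_eq_neg hB, hBu, neg_zero])
  have hc : ∀ j ∉ S, c j = 0 := by
    rw [← hrepr]
    exact (hker x).1 (by simpa [hu] using hsum)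
  have hxu : x = u :=
    (Finset.sum_subset (Finset.subset_univ S) fun j _ hj => by rw [hc j hj, zero_smul]).symm
  rw [← hrepr, hxu, hu, map_zero]
  exact fun _ => rfl

theorem coeff_finrank_ker_det_X_smul_add_C_ne_zero {A B : Matrix n n K} (hA : Aᵀ = -A)
    (hB : Bᵀ = -B)
    (hnd : ∀ v : n → K, A *ᵥ v = 0 → v ≠ 0 → ∃ w : n → K, A *ᵥ w = 0 ∧ v ⬝ᵥ B *ᵥ w ≠ 0) :
    (det ((Polynomial.X : K[X]) • B.map Polynomial.C + A.map Polynomial.C)).coeff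
      (Module.finrank K (LinearMap.ker A.mulVecLin)) ≠ 0 := by
  obtain ⟨b, S, hcard, hker⟩ := (LinearMap.ker A.mulVecLin).exists_basis_mem_iff_repr_eq_zero
    (Module.finrank_fintype_fun_eq_card K)
  replace hker : ∀ v, A *ᵥ v = 0 ↔ ∀ j ∉ S, b.repr v j = 0 := hker
  have hmixed : det (of fun j => if j ∈ S then B *ᵥ b j else A *ᵥ b j) ≠ 0 :=
    ((isUnit_iff_isUnit_det _).1 (linearIndependent_rows_iff_isUnit.1
      (linearIndependent_ite_mulVec hA hB hnd b S hker))).ne_zero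
  rw [← hcard]
  intro hzero
  rw [← coeff_det_X_smul_add_C_mul_det A B b S fun j => mulVec_basis_eq_zero_of_mem hker,
    hzero, zero_mul] at hmixed
  exact hmixed rfl

end Field

section Pencil

variable {n R : Type*} [Fintype n] [DecidableEq n] [CommRing R]

/-- The pencil `λA + μB`, with `λ = X 0` and `μ = X 1`. -/
noncomputable def pencil (A B : Matrix n n R) : Matrix n n (MvPolynomial (Fin 2) R) :=
  of fun i j => X 0 * MvPolynomial.C (A i j) + X 1 * MvPolynomial.C (B i j)

theorem X_one_dvd_det_pencil {A : Matrix n n R} (B : Matrix n n R) (hA : A.det = 0) :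
    X 1 ∣ (pencil A B).det := by
  refine X_dvd_iff_aeval_update_zero.2 ?_
  have hμ0 : (aeval (Function.update (X : Fin 2 → MvPolynomial (Fin 2) R) 1 0)).mapMatrix
      (pencil A B) = (X 0 : MvPolynomial (Fin 2) R) • A.map MvPolynomial.C := by
    ext i j
    simp [pencil]
  rw [AlgHom.map_det, hμ0, det_smul, ← RingHom.mapMatrix_apply, ← RingHom.map_det, hA,
    map_zero, mul_zero]

theorem aeval_det_pencil (A B : Matrix n n R) :
    aeval ![1, Polynomial.X] (pencil A B).det =
      det ((Polynomial.X : R[X]) • B.map Polynomial.C + A.map Polynomial.C) := by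
  rw [AlgHom.map_det]
  congr 1
  ext i j
  simp [pencil, add_comm]

end Pencil

end Matrix

theorem stmt3_general (q : ℕ) (hq4 : 4 ≤ q)
    (A B : Matrix (Fin q) (Fin q) ℂ)
    (hA : Aᵀ = -A) (hB : Bᵀ = -B)
    (hrk : A.rank = q - 2)
    (hnd : ∀ v : Fin q → ℂ, A.mulVec v = 0 → v ≠ 0 →
      ∃ w : Fin q → ℂ, A.mulVec w = 0 ∧ dotProduct v (B.mulVec w) ≠ 0)
    (Pf : MvPolynomial (Fin 2) ℂ)
    (hPf : Pf ^ 2 = Matrix.det (Matrix.of fun i j : Fin q =>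
      X (0 : Fin 2) * MvPolynomial.C (A i j) + X (1 : Fin 2) * MvPolynomial.C (B i j))) :
    (X (1 : Fin 2) ∣ Pf) ∧ ¬ (X (1 : Fin 2) ^ 2 ∣ Pf) := by
  change Pf ^ 2 = (pencil A B).det at hPf
  have hdetA : A.det = 0 := by
    by_contra h
    have := rank_of_det_ne_zero h
    simp only [Fintype.card_fin] at this
    omega
  have hker : Module.finrank ℂ (LinearMap.ker A.mulVecLin) = 2 := by
    have := A.rank_add_finrank_ker_mulVecLin
    rw [Fintype.card_fin] at this
    omega
  refine ⟨X_prime.dvd_of_dvd_pow (hPf ▸ X_one_dvd_det_pencil B hdetA), ?_⟩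
  rintro ⟨r, rfl⟩
  have hμ4 : Polynomial.X ^ 4 ∣
      det ((Polynomial.X : ℂ[X]) • B.map Polynomial.C + A.map Polynomial.C) :=
    ⟨aeval ![1, Polynomial.X] r ^ 2, by
      rw [← aeval_det_pencil, ← hPf, map_pow, map_mul, map_pow, aeval_X]
      simp only [Matrix.cons_val_one, Matrix.cons_val_fin_one]
      ring⟩
  exact coeff_finrank_ker_det_X_smul_add_C_ne_zero hA hB hnd
    (hker ▸ Polynomial.X_pow_dvd_iff.1 hμ4 2 (by norm_num))

/-- Let `q ≥ 4` be even, `A, B` skew-symmetric `q×q` complex matrices with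
`rank A = q - 2` and with the bilinear form of `B` nondegenerate on `ker A`.
Then `μ = 0` is a root of multiplicity exactly `1` of the Pfaffian `Pf(λA+μB)`
(any homogeneous square root of `det (λA+μB)`): `μ` divides `Pf` but `μ²` does not. -/
theorem stmt3 (q : ℕ) (hq4 : 4 ≤ q) (hqe : Even q)
    (A B : Matrix (Fin q) (Fin q) ℂ)
    (hA : Aᵀ = -A) (hB : Bᵀ = -B)
    (hrk : A.rank = q - 2)
    (hnd : ∀ v : Fin q → ℂ, A.mulVec v = 0 → v ≠ 0 →
      ∃ w : Fin q → ℂ, A.mulVec w = 0 ∧ dotProduct v (B.mulVec w) ≠ 0)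
    (Pf : MvPolynomial (Fin 2) ℂ)
    (hPf : Pf ^ 2 = Matrix.det (Matrix.of fun i j : Fin q =>
      X (0 : Fin 2) * MvPolynomial.C (A i j) + X (1 : Fin 2) * MvPolynomial.C (B i j))) :
    (X (1 : Fin 2) ∣ Pf) ∧ ¬ (X (1 : Fin 2) ^ 2 ∣ Pf) :=
  stmt3_general q hq4 A B hA hB hrk hnd Pf hPf
end

section
/- Let q = n+1 and consider the formal power series expansion in ℤ[[t]] of F(t) = ∏_{j=1}^{n} (1+jt)^{(-1)^{j+1} h_{n-j}}, where h_0, …, h_{n-1} are nonnegative integers (with negative exponents interpreted via geometric series). Then the coefficient s_n of t^n satisfies s_n ≡ C(h, n) mod 2, where h := Σ_{j=0}^{⌊(n-1)/2⌋} h_{n-1-2j} and C(h,n) is the binomial coefficient. -/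
/-!
Reducing modulo 2, a factor `1 + j t` becomes `1` for even `j` and `1 + t` for odd `j`, so the
image of `F` in `𝔽₂[[t]]` is `(1 + t)^h` with `h` the sum of the exponents `h_{n-j}` over odd `j`;
its coefficient of `t^n` is `C(h, n)`. Writing `j = 2i + 1` turns that sum into the one in the
statement (for `n = 0` both binomial coefficients are `1`).
-/

open PowerSeries Finset

theorem PowerSeries.coeff_one_add_X_pow (R : Type*) [Semiring R] (n k : ℕ) :
    coeff n ((1 + X : R⟦X⟧) ^ k) = (k.choose n : R) := by
  rw [← Polynomial.coeff_one_add_X_pow R k n, ← Polynomial.coeff_coe]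
  push_cast
  rfl

theorem sum_filter_odd_Icc_sub {M : Type*} [AddCommMonoid M] {n : ℕ} (hn : n ≠ 0) (g : ℕ → M) :
    ∑ j ∈ (Icc 1 n).filter Odd, g (n - j) = ∑ i ∈ range ((n - 1) / 2 + 1), g (n - 1 - 2 * i) := by
  refine sum_nbij' (fun j => (j - 1) / 2) (fun i => 2 * i + 1) ?_ ?_ ?_ ?_ ?_ <;>
    simp only [mem_filter, mem_Icc, mem_range, and_imp, Nat.odd_iff] <;> intros
  · omega
  · omega
  · omega
  · omega
  · congr 1; omega

theorem map_one_add_C_mul_X_of_even {j : ℕ} (hj : Even j) :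
    map (Int.castRingHom (ZMod 2)) (1 + C (j : ℤ) * X) = 1 := by
  rw [map_add, map_one, map_mul, map_C, map_X]
  simp [hj.natCast_zmod_two]

theorem map_one_add_C_mul_X_of_odd {j : ℕ} (hj : Odd j) :
    map (Int.castRingHom (ZMod 2)) (1 + C (j : ℤ) * X) = 1 + X := by
  rw [map_add, map_one, map_mul, map_C, map_X]
  simp [hj.natCast_zmod_two]

theorem map_zmod_two_eq_one_add_X_pow_of_mul_prod_even_eq_prod_odd {s : Finset ℕ} {k : ℕ → ℕ}
    {F : ℤ⟦X⟧}
    (hF : F * ∏ j ∈ s.filter Even, (1 + C (j : ℤ) * X) ^ k j =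
      ∏ j ∈ s.filter Odd, (1 + C (j : ℤ) * X) ^ k j) :
    map (Int.castRingHom (ZMod 2)) F = (1 + X) ^ ∑ j ∈ s.filter Odd, k j := by
  have h := congrArg (map (Int.castRingHom (ZMod 2))) hF
  simp only [map_mul, map_prod, map_pow] at h
  rwa [prod_eq_one fun j hj => by rw [map_one_add_C_mul_X_of_even (mem_filter.1 hj).2, one_pow],
    mul_one, prod_congr rfl fun j hj => by rw [map_one_add_C_mul_X_of_odd (mem_filter.1 hj).2],
    prod_pow_eq_pow_sum] at h

/-- Parity of the coefficient `s_n` of `t^n` in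
`F(t) = ∏_{j=1}^{n} (1+jt)^{(-1)^{j+1} h_{n-j}} ∈ ℤ[[t]]`:
`s_n ≡ C(h, n) (mod 2)` where `h = Σ_{j=0}^{⌊(n-1)/2⌋} h_{n-1-2j}`.
The series `F` is characterized by
`F · ∏_{j even} (1+jt)^{h_{n-j}} = ∏_{j odd} (1+jt)^{h_{n-j}}`. -/
theorem stmt10 (n : ℕ) (h : ℕ → ℕ) (F : PowerSeries ℤ)
    (hF : F * ∏ j ∈ (Finset.Icc 1 n).filter (fun j => Even j),
        (1 + PowerSeries.C (j : ℤ) * PowerSeries.X) ^ (h (n - j)) =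
      ∏ j ∈ (Finset.Icc 1 n).filter (fun j => Odd j),
        (1 + PowerSeries.C (j : ℤ) * PowerSeries.X) ^ (h (n - j))) :
    PowerSeries.coeff n F ≡
      ((∑ j ∈ Finset.range ((n - 1) / 2 + 1), h (n - 1 - 2 * j)).choose n : ℤ)
        [ZMOD 2] := by
  have hcoeff : ((coeff n F : ℤ) : ZMod 2) =
      ((∑ j ∈ (Icc 1 n).filter Odd, h (n - j)).choose n : ℕ) := by
    rw [← eq_intCast (Int.castRingHom (ZMod 2)), ← coeff_map,
      map_zmod_two_eq_one_add_X_pow_of_mul_prod_even_eq_prod_odd hF, coeff_one_add_X_pow]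
  refine (ZMod.intCast_eq_intCast_iff _ _ 2).mp ?_
  rw [hcoeff, Int.cast_natCast]
  rcases eq_or_ne n 0 with rfl | hn
  · simp
  · rw [sum_filter_odd_Icc_sub hn]
end
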